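/- arXiv:1602.06509 — 7 statements merged into one kernel-verified Lean document; each statement's English description precedes it below -/
import Mathlib

section
/- Let X and Z be independent real random variables with Z standard Gaussian and E[X²] < ∞, let τ > 0, and set R = X + τZ. If η : ℝ → ℝ is differentiable and divergence-free, i.e. E[η'(R)] = 0, and η(R), Z·η(R), X·η(R) are integrable, then E[τZ · η(R)] = 0 and, equivalently, E[(R − X)·(η(R) − X)] = 0; that is, the input error R − X and the output error η(R) − X of the estimator are orthogonal. -/
/-!
Gaussian integration by parts (Stein's lemma), `E[(Z - m) g(Z)] = v E[g'(Z)]` for `Z ~ N(m, v)`,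
comes from `(x - m) φ = -v φ'` for the Gaussian density `φ`. Applied for each fixed value `x` of
the independent `X` to `g = η (x + τ ·)` and integrated over the law of `X` (Fubini), it gives
`E[Z η(R)] = τ E[η'(R)] = 0`. The orthogonality form differs from this by `τ E[Z X]`, which
vanishes since `E[Z X] = E[Z] E[X] = 0`.
-/

open MeasureTheory ProbabilityTheory Real
open scoped NNReal

lemma MeasureTheory.Integrable.of_integrable_sub_mul {ν : Measure ℝ} [IsFiniteMeasure ν]
    {g : ℝ → ℝ} (c : ℝ) (hg : Continuous g) (h : Integrable (fun x => (x - c) * g x) ν) :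
    Integrable g ν := by
  obtain ⟨C, hC⟩ := (isCompact_closedBall c 1).exists_bound_of_continuousOn hg.continuousOn
  have hC0 : 0 ≤ C := (norm_nonneg _).trans (hC c (Metric.mem_closedBall_self zero_le_one))
  refine ((integrable_const C).add h.norm).mono' hg.aestronglyMeasurable
    (ae_of_all _ fun x => show ‖g x‖ ≤ C + ‖(x - c) * g x‖ from ?_)
  by_cases hx : x ∈ Metric.closedBall c 1
  · linarith [hC x hx, norm_nonneg ((x - c) * g x)]
  · rw [Metric.mem_closedBall, Real.dist_eq, not_le] at hx
    rw [norm_mul, Real.norm_eq_abs (x - c)]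
    nlinarith [norm_nonneg (g x)]

namespace ProbabilityTheory

variable {μ : ℝ} {v : ℝ≥0}

lemma hasDerivAt_gaussianPDFReal (μ : ℝ) (v : ℝ≥0) (x : ℝ) :
    HasDerivAt (gaussianPDFReal μ v) (-((x - μ) / v) * gaussianPDFReal μ v x) x := by
  have hexp : HasDerivAt (fun y => -(y - μ) ^ 2 / (2 * v)) (-((x - μ) / v)) x := by
    refine (((hasDerivAt_id' x).sub_const μ).fun_pow 2).neg.div_const (2 * (v : ℝ))
      |>.congr_deriv ?_
    ring
  refine (hexp.exp.const_mul (√(2 * π * v))⁻¹).congr_deriv ?_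
  rw [gaussianPDFReal]
  ring

lemma integrable_gaussianReal_iff (hv : v ≠ 0) {f : ℝ → ℝ} :
    Integrable f (gaussianReal μ v) ↔ Integrable (fun x => gaussianPDFReal μ v x * f x) := by
  rw [gaussianReal_of_var_ne_zero _ hv, integrable_withDensity_iff_integrable_smul'
    (measurable_gaussianPDF μ v) (ae_of_all _ fun _ => gaussianPDF_lt_top)]
  simp only [toReal_gaussianPDF, smul_eq_mul]

theorem integral_sub_mul_gaussianReal (hv : v ≠ 0) {g g' : ℝ → ℝ}
    (hg : ∀ x, HasDerivAt g (g' x) x) (hg' : Integrable g' (gaussianReal μ v))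
    (hxg : Integrable (fun x => (x - μ) * g x) (gaussianReal μ v)) :
    ∫ x, (x - μ) * g x ∂gaussianReal μ v = v * ∫ x, g' x ∂gaussianReal μ v := by
  set φ := gaussianPDFReal μ v
  set φ' := fun x => -((x - μ) / v) * φ x
  have hφxg : Integrable (fun x => φ x * ((x - μ) * g x)) :=
    (integrable_gaussianReal_iff hv).1 hxg
  have hgφ' : Integrable (g * φ') := by
    refine (hφxg.const_mul (-(v : ℝ)⁻¹)).congr (ae_of_all _ fun x => ?_)
    simp only [Pi.mul_apply, φ']
    ring
  have hg'φ : Integrable (g' * φ) := by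
    refine ((integrable_gaussianReal_iff hv).1 hg').congr (ae_of_all _ fun x => ?_)
    simp only [Pi.mul_apply, φ]
    ring
  have hgφ : Integrable (g * φ) := by
    have := (integrable_gaussianReal_iff hv).1
      (hxg.of_integrable_sub_mul μ (continuous_iff_continuousAt.2 fun x => (hg x).continuousAt))
    refine this.congr (ae_of_all _ fun x => ?_)
    simp only [Pi.mul_apply, φ]
    ring
  have hparts : ∫ x, g x * φ' x = -∫ x, g' x * φ x :=
    integral_mul_deriv_eq_deriv_mul_of_integrable (fun x _ => hg x)
      (fun x _ => hasDerivAt_gaussianPDFReal μ v x) hgφ' hg'φ hgφ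
  calc ∫ x, (x - μ) * g x ∂gaussianReal μ v
      = ∫ x, φ x * ((x - μ) * g x) := integral_gaussianReal_eq_integral_smul hv
    _ = -v * ∫ x, g x * φ' x := by
        rw [← integral_const_mul]
        congr 1 with x
        simp only [φ']
        field_simp
    _ = v * ∫ x, φ x * g' x := by
        rw [hparts]
        simp only [mul_comm (φ _)]
        ring
    _ = v * ∫ x, g' x ∂gaussianReal μ v := by
        rw [integral_gaussianReal_eq_integral_smul hv]
        rfl

theorem integral_prod_gaussianReal_sub_mul {α : Type*} [MeasurableSpace α] (ν : Measure α)
    [SFinite ν] (hv : v ≠ 0) {f f' : α → ℝ → ℝ}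
    (hf : ∀ x z, HasDerivAt (f x) (f' x z) z)
    (hf' : Integrable (fun p => f' p.1 p.2) (ν.prod (gaussianReal μ v)))
    (hzf : Integrable (fun p => (p.2 - μ) * f p.1 p.2) (ν.prod (gaussianReal μ v))) :
    ∫ p, (p.2 - μ) * f p.1 p.2 ∂ν.prod (gaussianReal μ v)
      = v * ∫ p, f' p.1 p.2 ∂ν.prod (gaussianReal μ v) := by
  rw [integral_prod _ hzf, integral_prod _ hf', ← integral_const_mul]
  refine integral_congr_ae ?_
  filter_upwards [hf'.prod_right_ae, hzf.prod_right_ae] with x hf'x hzfx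
  exact integral_sub_mul_gaussianReal hv (hf x) hf'x hzfx

lemma HasLaw.integrable_comp_iff {Ω 𝓧 : Type*} [MeasurableSpace Ω] [MeasurableSpace 𝓧]
    {P : Measure Ω} {ν : Measure 𝓧} {X : Ω → 𝓧} (hX : HasLaw X ν P) {f : 𝓧 → ℝ}
    (hf : AEStronglyMeasurable f ν) :
    Integrable (f ∘ X) P ↔ Integrable f ν := by
  rw [← hX.map_eq] at hf ⊢
  exact (integrable_map_measure hf hX.aemeasurable).symm

theorem IndepFun.integral_sub_mul_comp_add_mul_of_gaussianReal {Ω : Type*} [MeasurableSpace Ω]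
    {P : Measure Ω} [IsProbabilityMeasure P] {X Z : Ω → ℝ} (hX : AEMeasurable X P)
    (hZ : HasLaw Z (gaussianReal μ v) P) (hXZ : IndepFun X Z P) (hv : v ≠ 0) (τ : ℝ)
    {η : ℝ → ℝ} (hη : Differentiable ℝ η)
    (hη' : Integrable (fun ω => deriv η (X ω + τ * Z ω)) P)
    (hZη : Integrable (fun ω => (Z ω - μ) * η (X ω + τ * Z ω)) P) :
    ∫ ω, (Z ω - μ) * η (X ω + τ * Z ω) ∂P
      = τ * v * ∫ ω, deriv η (X ω + τ * Z ω) ∂P := by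
  have hlaw := hXZ.hasLaw_prod ⟨hX, rfl⟩ hZ
  have hadd : Measurable fun p : ℝ × ℝ => p.1 + τ * p.2 := by fun_prop
  have hF : Measurable fun p : ℝ × ℝ => (p.2 - μ) * η (p.1 + τ * p.2) :=
    (measurable_snd.sub_const μ).mul (hη.continuous.measurable.comp hadd)
  have hF' : Measurable fun p : ℝ × ℝ => τ * deriv η (p.1 + τ * p.2) :=
    ((measurable_deriv η).comp hadd).const_mul τ
  have hderiv : ∀ x z, HasDerivAt (fun z => η (x + τ * z)) (τ * deriv η (x + τ * z)) z := by
    intro x z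
    have hinner : HasDerivAt (fun z => x + τ * z) τ z := by
      simpa using ((hasDerivAt_id' z).const_mul τ).const_add x
    exact ((hη _).hasDerivAt.comp z hinner).congr_deriv (mul_comm _ _)
  have key := integral_prod_gaussianReal_sub_mul _ hv hderiv
    ((hlaw.integrable_comp_iff hF'.aestronglyMeasurable).1 (hη'.const_mul τ))
    ((hlaw.integrable_comp_iff hF.aestronglyMeasurable).1 hZη)
  rw [← hlaw.integral_comp hF.aestronglyMeasurable,
    ← hlaw.integral_comp hF'.aestronglyMeasurable] at key
  simp only [Function.comp_def, integral_const_mul] at key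
  rw [key]
  ring

end ProbabilityTheory

theorem divergence_free_orthogonality_general
    {Ω : Type*} [MeasurableSpace Ω] (μ : Measure Ω) [IsProbabilityMeasure μ]
    (X Z : Ω → ℝ) (hX : Measurable X) (hZ : Measurable Z)
    (hZlaw : Measure.map Z μ = gaussianReal 0 1)
    (hindep : IndepFun X Z μ)
    (hX2 : MemLp X 2 μ)
    (τ : ℝ)
    (η : ℝ → ℝ) (hη : Differentiable ℝ η)
    (hint0 : Integrable (fun ω => deriv η (X ω + τ * Z ω)) μ)
    (hdf : ∫ ω, deriv η (X ω + τ * Z ω) ∂μ = 0)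
    (hint2 : Integrable (fun ω => Z ω * η (X ω + τ * Z ω)) μ) :
    (∫ ω, τ * Z ω * η (X ω + τ * Z ω) ∂μ = 0)
    ∧ (∫ ω, ((X ω + τ * Z ω) - X ω) * (η (X ω + τ * Z ω) - X ω) ∂μ = 0) := by
  have hZgauss : HasLaw Z (gaussianReal 0 1) μ := ⟨hZ.aemeasurable, hZlaw⟩
  have hZη : ∫ ω, Z ω * η (X ω + τ * Z ω) ∂μ = 0 := by
    simpa [hdf] using hindep.integral_sub_mul_comp_add_mul_of_gaussianReal hX.aemeasurable
      hZgauss one_ne_zero τ hη hint0 (by simpa using hint2)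
  have hτZη : ∫ ω, τ * Z ω * η (X ω + τ * Z ω) ∂μ = 0 := by
    simp_rw [mul_assoc]
    rw [integral_const_mul, hZη, mul_zero]
  have hZint : Integrable Z μ :=
    (hZgauss.integrable_comp_iff aestronglyMeasurable_id).2
      ((memLp_id_gaussianReal 1).integrable le_rfl)
  have hZX : Integrable (fun ω => Z ω * X ω) μ :=
    hindep.symm.integrable_mul hZint (hX2.integrable one_le_two)
  have hEZX : ∫ ω, Z ω * X ω ∂μ = 0 := by
    rw [hindep.symm.integral_fun_mul_eq_mul_integral hZ.aestronglyMeasurable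
      hX.aestronglyMeasurable, hZgauss.integral_eq, integral_id_gaussianReal, zero_mul]
  refine ⟨hτZη, ?_⟩
  calc ∫ ω, ((X ω + τ * Z ω) - X ω) * (η (X ω + τ * Z ω) - X ω) ∂μ
      = ∫ ω, τ * (Z ω * η (X ω + τ * Z ω)) - τ * (Z ω * X ω) ∂μ := by
        congr 1 with ω
        ring
    _ = 0 := by
        rw [integral_sub (hint2.const_mul τ) (hZX.const_mul τ), integral_const_mul,
          integral_const_mul, hZη, hEZX]
        ring

/-- Proposition 2 of the paper and its equivalent form (III-A-orth3): if `η` is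
divergence-free, i.e. `E[η'(R)] = 0` for `R = X + τZ` with `Z` standard Gaussian
independent of `X`, then `E[τZ·η(R)] = 0`, and equivalently the input error `R − X`
and output error `η(R) − X` are orthogonal: `E[(R − X)(η(R) − X)] = 0`. -/
theorem divergence_free_orthogonality
    {Ω : Type*} [MeasurableSpace Ω] (μ : Measure Ω) [IsProbabilityMeasure μ]
    (X Z : Ω → ℝ) (hX : Measurable X) (hZ : Measurable Z)
    (hZlaw : Measure.map Z μ = gaussianReal 0 1)
    (hindep : IndepFun X Z μ)
    (hX2 : MemLp X 2 μ)
    (τ : ℝ) (hτ : 0 < τ)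
    (η : ℝ → ℝ) (hη : Differentiable ℝ η)
    (hint0 : Integrable (fun ω => deriv η (X ω + τ * Z ω)) μ)
    (hdf : ∫ ω, deriv η (X ω + τ * Z ω) ∂μ = 0)
    (hint1 : Integrable (fun ω => η (X ω + τ * Z ω)) μ)
    (hint2 : Integrable (fun ω => Z ω * η (X ω + τ * Z ω)) μ)
    (hint3 : Integrable (fun ω => X ω * η (X ω + τ * Z ω)) μ) :
    (∫ ω, τ * Z ω * η (X ω + τ * Z ω) ∂μ = 0)
    ∧ (∫ ω, ((X ω + τ * Z ω) - X ω) * (η (X ω + τ * Z ω) - X ω) ∂μ = 0) :=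
  divergence_free_orthogonality_general μ X Z hX hZ hZlaw hindep hX2 τ η hη hint0 hdf hint2
end

section
/- Let N ≥ 1, let v², σ² > 0, and let λ₁,…,λ_N be nonnegative reals with Σᵢ λᵢ² > 0. Define mmse_A(v²) = (1/N)·Σᵢ σ²·v²/(v²λᵢ² + σ²), and for the choice ĝᵢ = v²·λᵢ/(v²λᵢ² + σ²) define Φ(v²) = ((1/N)·Σᵢ ĝᵢ²λᵢ²)/((1/N)·Σᵢ ĝᵢλᵢ)² − 1)·v² + ((1/N)·Σᵢ ĝᵢ²)/((1/N)·Σᵢ ĝᵢλᵢ)²·σ². Then mmse_A(v²) < v² and Φ(v²) = (1/mmse_A(v²) − 1/v²)⁻¹. -/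
open scoped BigOperators

/-!
Write `dᵢ = v²λᵢ² + σ²` and `mᵢ = σ²v²/dᵢ` for the per-mode MMSE. Mode by mode,
`ĝᵢλᵢ = 1 - mᵢ/v²` and `ĝᵢ²(λᵢ²v² + σ²) = v²·ĝᵢλᵢ`, so after averaging
`S := 𝔼 ĝλ = 1 - mmse_A/v²` and the numerator of `Φ` collapses to `v²S`. Hence
`Φ = v²/S - v² = mmse_A·v²/(v² - mmse_A)`, which is `(1/mmse_A - 1/v²)⁻¹`.
Each `mᵢ ≤ v²`, strictly when `λᵢ ≠ 0`, which gives `mmse_A < v²`.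

The arguments `v`, `σ` below are the variances `v²`, `σ²` themselves.
-/

open Finset

noncomputable def modeMMSE (v σ l : ℝ) : ℝ := σ * v / (v * l ^ 2 + σ)

noncomputable def lmmseGain (v σ l : ℝ) : ℝ := v * l / (v * l ^ 2 + σ)

section

variable {v σ : ℝ}

lemma modeMMSE_denom_pos (hv : 0 < v) (hσ : 0 < σ) (l : ℝ) : 0 < v * l ^ 2 + σ := by positivity

lemma modeMMSE_pos (hv : 0 < v) (hσ : 0 < σ) (l : ℝ) : 0 < modeMMSE v σ l :=
  div_pos (mul_pos hσ hv) (modeMMSE_denom_pos hv hσ l)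

lemma modeMMSE_le (hv : 0 < v) (hσ : 0 < σ) (l : ℝ) : modeMMSE v σ l ≤ v := by
  rw [modeMMSE, div_le_iff₀ (modeMMSE_denom_pos hv hσ l)]
  nlinarith [mul_nonneg (mul_nonneg hv.le hv.le) (sq_nonneg l)]

lemma modeMMSE_lt_of_ne_zero (hv : 0 < v) (hσ : 0 < σ) {l : ℝ} (hl : l ≠ 0) :
    modeMMSE v σ l < v := by
  rw [modeMMSE, div_lt_iff₀ (modeMMSE_denom_pos hv hσ l)]
  nlinarith [mul_pos (mul_pos hv hv) (sq_pos_of_ne_zero hl)]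

lemma lmmseGain_mul_self {l : ℝ} (hv : v ≠ 0) (hd : v * l ^ 2 + σ ≠ 0) :
    lmmseGain v σ l * l = 1 - modeMMSE v σ l / v := by
  rw [lmmseGain, modeMMSE]
  field_simp
  ring

lemma lmmseGain_sq_mul_add {l : ℝ} (hd : v * l ^ 2 + σ ≠ 0) :
    lmmseGain v σ l ^ 2 * l ^ 2 * v + lmmseGain v σ l ^ 2 * σ = v * (lmmseGain v σ l * l) := by
  rw [lmmseGain]
  field_simp

lemma one_div_card_mul_sum_eq_expect {N : ℕ} (f : Fin N → ℝ) :
    (1 / N : ℝ) * ∑ i, f i = 𝔼 i, f i := by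
  rw [Fintype.expect_eq_sum_div_card, Fintype.card_fin, one_div_mul_eq_div]

variable {ι : Type*} [Fintype ι]

lemma expect_modeMMSE_pos [Nonempty ι] (hv : 0 < v) (hσ : 0 < σ) (l : ι → ℝ) :
    0 < 𝔼 i, modeMMSE v σ (l i) :=
  expect_pos (fun i _ => modeMMSE_pos hv hσ (l i)) univ_nonempty

lemma expect_modeMMSE_lt (hv : 0 < v) (hσ : 0 < σ) {l : ι → ℝ} (hl : ∃ i, l i ≠ 0) :
    𝔼 i, modeMMSE v σ (l i) < v := by
  obtain ⟨j, hj⟩ := hl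
  exact expect_lt (fun i _ => modeMMSE_le hv hσ (l i))
    ⟨j, mem_univ j, modeMMSE_lt_of_ne_zero hv hσ hj⟩

lemma expect_lmmseGain_mul_self [Nonempty ι] (hv : 0 < v) (hσ : 0 < σ) (l : ι → ℝ) :
    𝔼 i, lmmseGain v σ (l i) * l i = 1 - (𝔼 i, modeMMSE v σ (l i)) / v := by
  simp_rw [lmmseGain_mul_self hv.ne' (modeMMSE_denom_pos hv hσ _).ne', expect_sub_distrib,
    Fintype.expect_const, expect_div]

lemma expect_lmmseGain_sq_mul_add (hv : 0 < v) (hσ : 0 < σ) (l : ι → ℝ) :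
    (𝔼 i, lmmseGain v σ (l i) ^ 2 * l i ^ 2) * v + (𝔼 i, lmmseGain v σ (l i) ^ 2) * σ
      = v * 𝔼 i, lmmseGain v σ (l i) * l i := by
  simp_rw [expect_mul, mul_expect, ← expect_add_distrib,
    lmmseGain_sq_mul_add (modeMMSE_denom_pos hv hσ _).ne']

end

lemma se_map_eq_of_energy {A B S v σ : ℝ} (hS : S ≠ 0) (h : A * v + B * σ = v * S) :
    (A / S ^ 2 - 1) * v + B / S ^ 2 * σ = v / S - v := by
  field_simp
  linear_combination h

lemma div_one_sub_div_sub_self {m v : ℝ} (hm : m ≠ 0) (hv : v ≠ 0) (hmv : v - m ≠ 0) :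
    v / (1 - m / v) - v = (1 / m - 1 / v)⁻¹ := by
  field_simp
  ring

theorem optimized_SE_map_closed_form_general
    (N : ℕ)
    (v2 σ2 : ℝ) (hv2 : 0 < v2) (hσ2 : 0 < σ2)
    (lam : Fin N → ℝ)
    (hlam2 : 0 < ∑ i, lam i ^ 2)
    (g : Fin N → ℝ) (hgdef : ∀ i, g i = v2 * lam i / (v2 * lam i ^ 2 + σ2))
    (mmseA : ℝ) (hmmseA : mmseA = (1 / N : ℝ) * ∑ i, σ2 * v2 / (v2 * lam i ^ 2 + σ2))
    (Phi : ℝ)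
    (hPhi : Phi = (((1 / N : ℝ) * ∑ i, g i ^ 2 * lam i ^ 2)
          / ((1 / N : ℝ) * ∑ i, g i * lam i) ^ 2 - 1) * v2
        + ((1 / N : ℝ) * ∑ i, g i ^ 2)
          / ((1 / N : ℝ) * ∑ i, g i * lam i) ^ 2 * σ2) :
    mmseA < v2 ∧ Phi = (1 / mmseA - 1 / v2)⁻¹ := by
  obtain ⟨j, -, hj⟩ := exists_ne_zero_of_sum_ne_zero hlam2.ne'
  have : Nonempty (Fin N) := ⟨j⟩
  obtain rfl : g = fun i => lmmseGain v2 σ2 (lam i) := funext hgdef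
  replace hmmseA : mmseA = 𝔼 i, modeMMSE v2 σ2 (lam i) :=
    hmmseA.trans (one_div_card_mul_sum_eq_expect _)
  simp only [one_div_card_mul_sum_eq_expect] at hPhi
  have hm_lt : mmseA < v2 :=
    hmmseA ▸ expect_modeMMSE_lt hv2 hσ2 ⟨j, (pow_ne_zero_iff two_ne_zero).mp hj⟩
  have hm_pos : 0 < mmseA := hmmseA ▸ expect_modeMMSE_pos hv2 hσ2 lam
  have hS : 𝔼 i, lmmseGain v2 σ2 (lam i) * lam i = 1 - mmseA / v2 :=
    hmmseA ▸ expect_lmmseGain_mul_self hv2 hσ2 lam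
  have hS_pos : 0 < 1 - mmseA / v2 := sub_pos.mpr ((div_lt_one hv2).mpr hm_lt)
  refine ⟨hm_lt, ?_⟩
  rw [hPhi, se_map_eq_of_energy (hS ▸ hS_pos.ne') (expect_lmmseGain_sq_mul_add hv2 hσ2 lam), hS]
  exact div_one_sub_div_sub_self hm_pos.ne' hv2.ne' (sub_pos.mpr hm_lt).ne'

/-- Closed form (opt_SE_opt_a) of the paper: with `mmse_A(v²) = (1/N)·Σᵢ σ²v²/(v²λᵢ²+σ²)`
and the LMMSE singular values `ĝᵢ = v²λᵢ/(v²λᵢ²+σ²)`, the state-evolution map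
`Φ(v²) = ((1/N)Σĝᵢ²λᵢ²/((1/N)Σĝᵢλᵢ)² − 1)·v² + (1/N)Σĝᵢ²/((1/N)Σĝᵢλᵢ)²·σ²`
satisfies `mmse_A(v²) < v²` and `Φ(v²) = (1/mmse_A(v²) − 1/v²)⁻¹`. -/
theorem optimized_SE_map_closed_form
    (N : ℕ) (hN : 1 ≤ N)
    (v2 σ2 : ℝ) (hv2 : 0 < v2) (hσ2 : 0 < σ2)
    (lam : Fin N → ℝ) (hlam : ∀ i, 0 ≤ lam i)
    (hlam2 : 0 < ∑ i, lam i ^ 2)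
    (g : Fin N → ℝ) (hgdef : ∀ i, g i = v2 * lam i / (v2 * lam i ^ 2 + σ2))
    (mmseA : ℝ) (hmmseA : mmseA = (1 / N : ℝ) * ∑ i, σ2 * v2 / (v2 * lam i ^ 2 + σ2))
    (Phi : ℝ)
    (hPhi : Phi = (((1 / N : ℝ) * ∑ i, g i ^ 2 * lam i ^ 2)
          / ((1 / N : ℝ) * ∑ i, g i * lam i) ^ 2 - 1) * v2
        + ((1 / N : ℝ) * ∑ i, g i ^ 2)
          / ((1 / N : ℝ) * ∑ i, g i * lam i) ^ 2 * σ2) :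
    mmseA < v2 ∧ Phi = (1 / mmseA - 1 / v2)⁻¹ :=
  optimized_SE_map_closed_form_general N v2 σ2 hv2 hσ2 lam hlam2 g hgdef mmseA hmmseA Phi hPhi
end

section
/- Let N ≥ 1, let σ² > 0, and let λ₁,…,λ_N be nonnegative reals. Define mmse_A(v) = (1/N)·Σᵢ σ²·v/(v·λᵢ² + σ²) for v > 0. Then for every v > 0, the derivative satisfies (d/dv) mmse_A(v) ≥ (mmse_A(v)/v)². -/
open Finset

/-! Each summand `σ²w/(wλ² + σ²)` has derivative `(σ²/(vλ² + σ²))²`, the square of the summand of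
`mmse_A(v)/v`; the inequality is then Jensen's inequality "square of the mean ≤ mean of the squares". -/

theorem hasDerivAt_mul_div_mul_add {b c v : ℝ} (h : v * b + c ≠ 0) :
    HasDerivAt (fun w : ℝ => c * w / (w * b + c)) ((c / (v * b + c)) ^ 2) v := by
  have hnum : HasDerivAt (fun w : ℝ => c * w) c v := by
    simpa using (hasDerivAt_id v).const_mul c
  have hden : HasDerivAt (fun w : ℝ => w * b + c) b v := by
    simpa using ((hasDerivAt_id v).mul_const b).add_const c
  exact (hnum.div hden h).congr_deriv (by rw [div_pow]; ring)

theorem mmseA_deriv_lower_bound_general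
    (N : ℕ)
    (σ2 : ℝ) (hσ2 : 0 < σ2)
    (lam : Fin N → ℝ) :
    ∀ v : ℝ, 0 < v →
      deriv (fun w : ℝ => (1 / N : ℝ) * ∑ i, σ2 * w / (w * lam i ^ 2 + σ2)) v
        ≥ (((1 / N : ℝ) * ∑ i, σ2 * v / (v * lam i ^ 2 + σ2)) / v) ^ 2 := by
  intro v hv
  have hden : ∀ i, v * lam i ^ 2 + σ2 ≠ 0 := fun i => by positivity
  have hderiv : HasDerivAt (fun w : ℝ => (1 / N : ℝ) * ∑ i, σ2 * w / (w * lam i ^ 2 + σ2))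
      ((1 / N : ℝ) * ∑ i, (σ2 / (v * lam i ^ 2 + σ2)) ^ 2) v :=
    (HasDerivAt.fun_sum fun i _ => hasDerivAt_mul_div_mul_add (hden i)).const_mul _
  have hmean : ((1 / N : ℝ) * ∑ i, σ2 * v / (v * lam i ^ 2 + σ2)) / v
      = (1 / N : ℝ) * ∑ i, σ2 / (v * lam i ^ 2 + σ2) := by
    rw [mul_div_assoc, sum_div]
    congr 2 with i
    field_simp
  rw [hderiv.deriv, hmean, ge_iff_le, one_div_mul_eq_div, one_div_mul_eq_div]
  simpa only [card_univ, Fintype.card_fin] using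
    sum_div_card_sq_le_sum_sq_div_card (s := univ) (f := fun i => σ2 / (v * lam i ^ 2 + σ2))

/-- Inequality (AppIV-5) in Appendix III of the paper: for
`mmse_A(v) = (1/N)·Σᵢ σ²v/(vλᵢ² + σ²)`, the derivative satisfies
`(d/dv) mmse_A(v) ≥ (mmse_A(v)/v)²` for every `v > 0`. -/
theorem mmseA_deriv_lower_bound
    (N : ℕ) (hN : 1 ≤ N)
    (σ2 : ℝ) (hσ2 : 0 < σ2)
    (lam : Fin N → ℝ) (hlam : ∀ i, 0 ≤ lam i) :
    ∀ v : ℝ, 0 < v →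
      deriv (fun w : ℝ => (1 / N : ℝ) * ∑ i, σ2 * w / (w * lam i ^ 2 + σ2)) v
        ≥ (((1 / N : ℝ) * ∑ i, σ2 * v / (v * lam i ^ 2 + σ2)) / v) ^ 2 :=
  mmseA_deriv_lower_bound_general N σ2 hσ2 lam
end

section
/- Let N ≥ 1, let σ² > 0, and let λ₁,…,λ_N be nonnegative reals with Σᵢ λᵢ² > 0. Define mmse_A(v) = (1/N)·Σᵢ σ²·v/(v·λᵢ² + σ²) and Φ*(v) = (1/mmse_A(v) − 1/v)⁻¹ = v·mmse_A(v)/(v − mmse_A(v)) for v > 0. Then 0 < mmse_A(v) < v for all v > 0, and Φ* is monotonically nondecreasing on (0, ∞). -/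
/-!
Writing `R(v) = Σᵢ 1/(vλᵢ² + σ²)` and `W(v) = Σᵢ λᵢ²/(vλᵢ² + σ²)`, one has
`mmse_A(v) = σ²v·R(v)/N` and `v − mmse_A(v) = v²·W(v)/N`, so `Φ*(v) = σ²·R(v)/W(v)`.
Monotonicity of this ratio, `R(u)W(v) ≤ R(v)W(u)` for `u ≤ v`, follows by symmetrising the
double sum over pairs `(i, j)`: each symmetric pair contributes
`σ²(v − u)(λᵢ² − λⱼ²)² / (positive)`.
-/

open scoped BigOperators

theorem Finset.sum_mul_sum_le_sum_mul_sum_of_add_swap_le {ι R : Type*}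
    [CommRing R] [LinearOrder R] [IsStrictOrderedRing R] (s : Finset ι) (a b c d : ι → R)
    (h : ∀ i ∈ s, ∀ j ∈ s, a i * b j + a j * b i ≤ c i * d j + c j * d i) :
    (∑ i ∈ s, a i) * ∑ i ∈ s, b i ≤ (∑ i ∈ s, c i) * ∑ i ∈ s, d i := by
  have symmetrize : ∀ f g : ι → R, 2 * ((∑ i ∈ s, f i) * ∑ i ∈ s, g i) =
      ∑ i ∈ s, ∑ j ∈ s, (f i * g j + f j * g i) := fun f g => by
    rw [Finset.sum_mul_sum, two_mul]
    simp only [Finset.sum_add_distrib]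
    rw [Finset.sum_comm (f := fun i j => f j * g i)]
  have hsum := Finset.sum_le_sum fun i hi => Finset.sum_le_sum fun j hj => h i hi j hj
  rw [← symmetrize, ← symmetrize] at hsum
  exact le_of_mul_le_mul_left hsum two_pos

theorem resolvent_swap_le {σ2 u v x y : ℝ} (hσ2 : 0 < σ2) (hu : 0 ≤ u) (huv : u ≤ v)
    (hx : 0 ≤ x) (hy : 0 ≤ y) :
    1 / (u * x + σ2) * (y / (v * y + σ2)) + 1 / (u * y + σ2) * (x / (v * x + σ2)) ≤
      1 / (v * x + σ2) * (y / (u * y + σ2)) + 1 / (v * y + σ2) * (x / (u * x + σ2)) := by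
  have hv : 0 ≤ v := hu.trans huv
  have hux : 0 < u * x + σ2 := by positivity
  have huy : 0 < u * y + σ2 := by positivity
  have hvx : 0 < v * x + σ2 := by positivity
  have hvy : 0 < v * y + σ2 := by positivity
  rw [← sub_nonneg]
  have gap : 1 / (v * x + σ2) * (y / (u * y + σ2)) + 1 / (v * y + σ2) * (x / (u * x + σ2)) -
      (1 / (u * x + σ2) * (y / (v * y + σ2)) + 1 / (u * y + σ2) * (x / (v * x + σ2))) =
      σ2 * (v - u) * (x - y) ^ 2 /
        ((u * x + σ2) * (v * x + σ2) * (u * y + σ2) * (v * y + σ2)) := by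
    field_simp
    ring
  rw [gap]
  have : 0 ≤ v - u := sub_nonneg.2 huv
  positivity

namespace OptimizedSE

variable {ι : Type*} [Fintype ι] (σ2 : ℝ) (lam : ι → ℝ)

noncomputable def mmse (v : ℝ) : ℝ :=
  (1 / Fintype.card ι : ℝ) * ∑ i, σ2 * v / (v * lam i ^ 2 + σ2)

noncomputable def optSE (v : ℝ) : ℝ := (1 / mmse σ2 lam v - 1 / v)⁻¹

noncomputable def resolventTrace (v : ℝ) : ℝ := ∑ i, 1 / (v * lam i ^ 2 + σ2)

noncomputable def weightedResolventTrace (v : ℝ) : ℝ := ∑ i, lam i ^ 2 / (v * lam i ^ 2 + σ2)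

variable {σ2 lam}

theorem resolventTrace_pos [Nonempty ι] (hσ2 : 0 < σ2) {v : ℝ} (hv : 0 ≤ v) :
    0 < resolventTrace σ2 lam v :=
  Finset.sum_pos (fun i _ => by positivity) Finset.univ_nonempty

theorem weightedResolventTrace_pos (hσ2 : 0 < σ2) (hlam : ∃ i, lam i ≠ 0) {v : ℝ}
    (hv : 0 ≤ v) : 0 < weightedResolventTrace σ2 lam v := by
  obtain ⟨i₀, hi₀⟩ := hlam
  exact Finset.sum_pos' (fun i _ => by positivity) ⟨i₀, Finset.mem_univ i₀, by positivity⟩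

theorem mmse_eq (v : ℝ) :
    mmse σ2 lam v = σ2 * v / Fintype.card ι * resolventTrace σ2 lam v := by
  rw [mmse, resolventTrace, Finset.mul_sum, Finset.mul_sum]
  exact Finset.sum_congr rfl fun i _ => by ring

theorem sub_mmse_eq [Nonempty ι] (hσ2 : 0 < σ2) {v : ℝ} (hv : 0 ≤ v) :
    v - mmse σ2 lam v = v ^ 2 / Fintype.card ι * weightedResolventTrace σ2 lam v := by
  have hcard : (Fintype.card ι : ℝ) ≠ 0 := Nat.cast_ne_zero.2 Fintype.card_ne_zero
  have hv_eq : v = ∑ _i : ι, v / Fintype.card ι := by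
    rw [Finset.sum_const, Finset.card_univ, nsmul_eq_mul]
    field_simp
  rw [mmse, weightedResolventTrace, Finset.mul_sum, Finset.mul_sum]
  nth_rw 1 [hv_eq]
  rw [← Finset.sum_sub_distrib]
  refine Finset.sum_congr rfl fun i _ => ?_
  have : v * lam i ^ 2 + σ2 ≠ 0 := by positivity
  field_simp
  ring

theorem mmse_pos [Nonempty ι] (hσ2 : 0 < σ2) {v : ℝ} (hv : 0 < v) : 0 < mmse σ2 lam v := by
  rw [mmse_eq]
  have := resolventTrace_pos (lam := lam) hσ2 hv.le
  positivity

theorem mmse_lt_self (hσ2 : 0 < σ2) (hlam : ∃ i, lam i ≠ 0) {v : ℝ} (hv : 0 < v) :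
    mmse σ2 lam v < v := by
  have : Nonempty ι := ⟨hlam.choose⟩
  have := weightedResolventTrace_pos hσ2 hlam hv.le
  rw [← sub_pos, sub_mmse_eq hσ2 hv.le]
  positivity

theorem optSE_eq_mul_div (hσ2 : 0 < σ2) (hlam : ∃ i, lam i ≠ 0) {v : ℝ} (hv : 0 < v) :
    optSE σ2 lam v = v * mmse σ2 lam v / (v - mmse σ2 lam v) := by
  have : Nonempty ι := ⟨hlam.choose⟩
  rw [optSE, one_div, one_div, inv_sub_inv (mmse_pos hσ2 hv).ne' hv.ne', inv_div, mul_comm]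

theorem optSE_eq_resolventTrace_div (hσ2 : 0 < σ2) (hlam : ∃ i, lam i ≠ 0) {v : ℝ}
    (hv : 0 < v) :
    optSE σ2 lam v = σ2 * resolventTrace σ2 lam v / weightedResolventTrace σ2 lam v := by
  have : Nonempty ι := ⟨hlam.choose⟩
  have hcard : (Fintype.card ι : ℝ) ≠ 0 := Nat.cast_ne_zero.2 Fintype.card_ne_zero
  have := (weightedResolventTrace_pos hσ2 hlam hv.le).ne'
  rw [optSE_eq_mul_div hσ2 hlam hv, sub_mmse_eq hσ2 hv.le, mmse_eq]
  field_simp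

theorem resolventTrace_mul_le (hσ2 : 0 < σ2) {u v : ℝ} (hu : 0 ≤ u) (huv : u ≤ v) :
    resolventTrace σ2 lam u * weightedResolventTrace σ2 lam v ≤
      resolventTrace σ2 lam v * weightedResolventTrace σ2 lam u :=
  Finset.sum_mul_sum_le_sum_mul_sum_of_add_swap_le _ _ _ _ _ fun i _ j _ =>
    resolvent_swap_le hσ2 hu huv (sq_nonneg (lam i)) (sq_nonneg (lam j))

theorem optSE_monotoneOn (hσ2 : 0 < σ2) (hlam : ∃ i, lam i ≠ 0) :
    MonotoneOn (optSE σ2 lam) (Set.Ioi 0) := by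
  intro u hu v hv huv
  rw [optSE_eq_resolventTrace_div hσ2 hlam hu, optSE_eq_resolventTrace_div hσ2 hlam hv,
    div_le_div_iff₀ (weightedResolventTrace_pos hσ2 hlam (le_of_lt hu))
      (weightedResolventTrace_pos hσ2 hlam (le_of_lt hv)), mul_assoc, mul_assoc]
  exact mul_le_mul_of_nonneg_left (resolventTrace_mul_le hσ2 (le_of_lt hu) huv) hσ2.le

end OptimizedSE

theorem optimized_SE_map_monotone_general
    (N : ℕ)
    (σ2 : ℝ) (hσ2 : 0 < σ2)
    (lam : Fin N → ℝ)
    (hlam2 : 0 < ∑ i, lam i ^ 2)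
    (m : ℝ → ℝ)
    (hm : ∀ v : ℝ, m v = (1 / N : ℝ) * ∑ i, σ2 * v / (v * lam i ^ 2 + σ2)) :
    (∀ v : ℝ, 0 < v → 0 < m v ∧ m v < v)
    ∧ (∀ v : ℝ, 0 < v → (1 / m v - 1 / v)⁻¹ = v * m v / (v - m v))
    ∧ MonotoneOn (fun v : ℝ => (1 / m v - 1 / v)⁻¹) (Set.Ioi 0) := by
  obtain rfl : m = OptimizedSE.mmse σ2 lam :=
    funext fun v => by rw [hm, OptimizedSE.mmse, Fintype.card_fin]
  have hlam : ∃ i, lam i ≠ 0 := by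
    obtain ⟨i, -, hi⟩ := Finset.exists_ne_zero_of_sum_ne_zero hlam2.ne'
    exact ⟨i, pow_ne_zero_iff two_ne_zero |>.1 hi⟩
  have : Nonempty (Fin N) := ⟨hlam.choose⟩
  exact ⟨fun v hv => ⟨OptimizedSE.mmse_pos hσ2 hv, OptimizedSE.mmse_lt_self hσ2 hlam hv⟩,
    fun v hv => OptimizedSE.optSE_eq_mul_div hσ2 hlam hv,
    OptimizedSE.optSE_monotoneOn hσ2 hlam⟩

/-- The `Φ*` part of Lemma 2 of the paper: with
`mmse_A(v) = (1/N)·Σᵢ σ²v/(vλᵢ² + σ²)` one has `0 < mmse_A(v) < v` for all `v > 0`,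
the two expressions `(1/mmse_A(v) − 1/v)⁻¹` and `v·mmse_A(v)/(v − mmse_A(v))` for the
optimized state-evolution map `Φ*` agree, and `Φ*` is monotonically nondecreasing on
`(0, ∞)`. -/
theorem optimized_SE_map_monotone
    (N : ℕ) (hN : 1 ≤ N)
    (σ2 : ℝ) (hσ2 : 0 < σ2)
    (lam : Fin N → ℝ) (hlam : ∀ i, 0 ≤ lam i)
    (hlam2 : 0 < ∑ i, lam i ^ 2)
    (m : ℝ → ℝ)
    (hm : ∀ v : ℝ, m v = (1 / N : ℝ) * ∑ i, σ2 * v / (v * lam i ^ 2 + σ2)) :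
    (∀ v : ℝ, 0 < v → 0 < m v ∧ m v < v)
    ∧ (∀ v : ℝ, 0 < v → (1 / m v - 1 / v)⁻¹ = v * m v / (v - m v))
    ∧ MonotoneOn (fun v : ℝ => (1 / m v - 1 / v)⁻¹) (Set.Ioi 0) :=
  optimized_SE_map_monotone_general N σ2 hσ2 lam hlam2 m hm
end

section
/- Let X and Z be independent real random variables with Z standard Gaussian and E[X²] < ∞, let τ > 0, and set R = X + τZ and mmse_B = E[(E[X|R] − X)²]. Assume 0 < mmse_B < τ², and define η*(r) = C*·(E[X|R = r] − (mmse_B/τ²)·r) with C* = τ²/(τ² − mmse_B). If η : ℝ → ℝ is measurable with E[η(R)²] < ∞ and satisfies the orthogonality condition E[η(R)·(R − X)] = 0, then E[η(R)·(E[X|R] − η*(R))] = 0. -/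
/-!
Since `C* − 1 = mmse_B / (τ² − mmse_B)`, the estimator `η*(R) = C*·E[X|R] + (1 − C*)·R` satisfies
`E[X|R] − η*(R) = (mmse_B / (τ² − mmse_B))·(R − E[X|R])`. By the tower property
`E[η(R)·E[X|R]] = E[η(R)·X]`, so `E[η(R)·(R − E[X|R])] = E[η(R)·(R − X)] = 0`.
-/

open MeasureTheory ProbabilityTheory

theorem MeasureTheory.integral_add_eq_left_of_integral_eq_zero {α G : Type*} [MeasurableSpace α]
    {μ : Measure α} [NormedAddCommGroup G] [NormedSpace ℝ G] {f g : α → G}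
    (hg : Integrable g μ) (hg0 : ∫ x, g x ∂μ = 0) : ∫ x, f x + g x ∂μ = ∫ x, f x ∂μ := by
  by_cases hf : Integrable f μ
  · rw [integral_add hf hg, hg0, add_zero]
  · have hfg : ¬ Integrable (fun x ↦ f x + g x) μ := by
      rwa [integrable_add_iff_integrable_left' hg]
    rw [integral_undef hf, integral_undef hfg]

section PullOut

variable {Ω : Type*} {m m₀ : MeasurableSpace Ω} {μ : Measure Ω} {f g : Ω → ℝ}

theorem MeasureTheory.integrable_mul_condExp (hf : StronglyMeasurable[m] f)
    (hfg : Integrable (fun ω ↦ f ω * g ω) μ) (hg : Integrable g μ) :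
    Integrable (fun ω ↦ f ω * μ[g | m] ω) μ :=
  integrable_condExp.congr (condExp_mul_of_stronglyMeasurable_left hf hfg hg)

theorem MeasureTheory.integrable_mul_sub_condExp (hf : StronglyMeasurable[m] f)
    (hfg : Integrable (fun ω ↦ f ω * g ω) μ) (hg : Integrable g μ) :
    Integrable (fun ω ↦ f ω * (g ω - μ[g | m] ω)) μ := by
  rw [funext fun ω ↦ mul_sub (f ω) (g ω) (μ[g | m] ω)]
  exact hfg.sub (integrable_mul_condExp hf hfg hg)

theorem MeasureTheory.integral_mul_sub_condExp (hm : m ≤ m₀) [SigmaFinite (μ.trim hm)]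
    (hf : StronglyMeasurable[m] f) (hfg : Integrable (fun ω ↦ f ω * g ω) μ)
    (hg : Integrable g μ) :
    ∫ ω, f ω * (g ω - μ[g | m] ω) ∂μ = 0 := by
  have htower : ∫ ω, f ω * μ[g | m] ω ∂μ = ∫ ω, f ω * g ω ∂μ :=
    (integral_congr_ae (condExp_mul_of_stronglyMeasurable_left hf hfg hg)).symm.trans
      (integral_condExp hm)
  simp only [mul_sub]
  rw [integral_sub hfg (integrable_mul_condExp hf hfg hg), htower, sub_self]

end PullOut

theorem eta_star_orthogonality_lemma_general
    {Ω : Type*} [MeasurableSpace Ω] (μ : Measure Ω) [IsProbabilityMeasure μ]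
    (X Z : Ω → ℝ) (hX : Measurable X) (hZ : Measurable Z)
    (hX2 : MemLp X 2 μ)
    (τ : ℝ) (hτ : 0 < τ)
    (R : Ω → ℝ) (hR : R = fun ω => X ω + τ * Z ω)
    (CE : Ω → ℝ) (hCE : CE = μ[X | MeasurableSpace.comap R inferInstance])
    (mmseB : ℝ) (hB2 : mmseB < τ ^ 2)
    (Cstar : ℝ) (hCstar : Cstar = τ ^ 2 / (τ ^ 2 - mmseB))
    (η : ℝ → ℝ) (hη : Measurable η)
    (hη2 : MemLp (fun ω => η (R ω)) 2 μ)
    (horth : ∫ ω, η (R ω) * (R ω - X ω) ∂μ = 0) :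
    ∫ ω, η (R ω) * (CE ω - Cstar * (CE ω - mmseB / τ ^ 2 * R ω)) ∂μ = 0 := by
  have hRm : Measurable R := hR ▸ hX.add (measurable_const.mul hZ)
  have hηR : StronglyMeasurable[MeasurableSpace.comap R inferInstance] (fun ω ↦ η (R ω)) :=
    (hη.comp (comap_measurable R)).stronglyMeasurable
  have hηX : Integrable (fun ω ↦ η (R ω) * X ω) μ := hη2.integrable_mul hX2
  have hXi : Integrable X μ := hX2.integrable one_le_two
  have hshrink : ∀ ω, η (R ω) * (CE ω - Cstar * (CE ω - mmseB / τ ^ 2 * R ω))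
      = mmseB / (τ ^ 2 - mmseB) * (η (R ω) * (R ω - X ω) + η (R ω) * (X ω - CE ω)) := by
    intro ω
    have : τ ^ 2 - mmseB ≠ 0 := by linarith
    rw [hCstar]
    field_simp
    ring
  subst hCE
  simp_rw [hshrink]
  rw [integral_const_mul, integral_add_eq_left_of_integral_eq_zero
      (integrable_mul_sub_condExp hηR hηX hXi) (integral_mul_sub_condExp hRm.comap_le hηR hηX hXi),
    horth, mul_zero]

/-- Lemma 4 in Appendix II of the paper: for `R = X + τZ` (`Z` standard Gaussian
independent of `X`), `mmse_B = E[(E[X|R] − X)²]`, and the optimal divergence-free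
estimator `η*(r) = C*·(E[X|R=r] − (mmse_B/τ²)·r)` with `C* = τ²/(τ² − mmse_B)`,
any estimator `η` satisfying the orthogonality condition `E[η(R)·(R − X)] = 0`
satisfies `E[η(R)·(E[X|R] − η*(R))] = 0`. -/
theorem eta_star_orthogonality_lemma
    {Ω : Type*} [MeasurableSpace Ω] (μ : Measure Ω) [IsProbabilityMeasure μ]
    (X Z : Ω → ℝ) (hX : Measurable X) (hZ : Measurable Z)
    (hZlaw : Measure.map Z μ = gaussianReal 0 1)
    (hindep : IndepFun X Z μ)
    (hX2 : MemLp X 2 μ)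
    (τ : ℝ) (hτ : 0 < τ)
    (R : Ω → ℝ) (hR : R = fun ω => X ω + τ * Z ω)
    (CE : Ω → ℝ) (hCE : CE = μ[X | MeasurableSpace.comap R inferInstance])
    (mmseB : ℝ) (hmmseB : mmseB = ∫ ω, (CE ω - X ω) ^ 2 ∂μ)
    (hB1 : 0 < mmseB) (hB2 : mmseB < τ ^ 2)
    (Cstar : ℝ) (hCstar : Cstar = τ ^ 2 / (τ ^ 2 - mmseB))
    (η : ℝ → ℝ) (hη : Measurable η)
    (hη2 : MemLp (fun ω => η (R ω)) 2 μ)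
    (horth : ∫ ω, η (R ω) * (R ω - X ω) ∂μ = 0) :
    ∫ ω, η (R ω) * (CE ω - Cstar * (CE ω - mmseB / τ ^ 2 * R ω)) ∂μ = 0 :=
  eta_star_orthogonality_lemma_general μ X Z hX hZ hX2 τ hτ R hR CE hCE mmseB hB2 Cstar hCstar η hη
    hη2 horth
end

section
/- Let X and Z be independent real random variables with Z standard Gaussian and E[X²] < ∞, let τ > 0, and set R = X + τZ and mmse_B = E[(E[X|R] − X)²]. Assume 0 < mmse_B < τ², and define η*(r) = C*·(E[X|R = r] − (mmse_B/τ²)·r) with C* = τ²/(τ² − mmse_B). Then for every measurable η : ℝ → ℝ with E[η(R)²] < ∞ satisfying the orthogonality condition E[η(R)·(R − X)] = 0, it holds that E[(η(R) − X)²] ≥ E[(η*(R) − X)²], with equality if and only if η(R) = η*(R) almost surely; i.e., η* minimizes the mean-squared error among all such estimators. -/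
/-!
Write `N = R - X` for the noise and `η* = C*·E[X|R] - (C* - 1)·R`, which is the estimator of the
statement because `C*·mmse_B/τ² = C* - 1`. Then `η* - X = C*·(E[X|R] - X) - (C* - 1)·N`, and the
Bayes residual `E[X|R] - X` is orthogonal to every square-integrable function of `R`; hence
`E[f(R)·(η* - X)] = (1 - C*)·E[f(R)·N]`. Since `N` is uncorrelated with `X` and has variance `τ²`,
`E[η*·N] = C*·mmse_B - (C* - 1)·τ²`, which vanishes exactly for `C* = τ²/(τ² - mmse_B)`. So for
every `η` satisfying the orthogonality condition, `η(R) - η*` is orthogonal to `η* - X`, and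
Pythagoras gives `E[(η(R) - X)²] = E[(η(R) - η*)²] + E[(η* - X)²]`.
-/

open MeasureTheory ProbabilityTheory

section Gaussian

variable {Ω : Type*} [MeasurableSpace Ω] {μ : Measure Ω} {Z : Ω → ℝ} {m : ℝ} {v : NNReal}

lemma memLp_two_of_map_eq_gaussianReal (hZ : Measurable Z) (hZlaw : μ.map Z = gaussianReal m v) :
    MemLp Z 2 μ := by
  have h : MemLp id 2 (μ.map Z) := hZlaw ▸ memLp_id_gaussianReal 2
  exact (memLp_map_measure_iff aestronglyMeasurable_id hZ.aemeasurable).mp h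

lemma integral_eq_of_map_eq_gaussianReal (hZ : Measurable Z) (hZlaw : μ.map Z = gaussianReal m v) :
    ∫ ω, Z ω ∂μ = m := by
  calc ∫ ω, Z ω ∂μ = ∫ x, x ∂(μ.map Z) :=
        (integral_map hZ.aemeasurable aestronglyMeasurable_id).symm
    _ = m := by rw [hZlaw, integral_id_gaussianReal]

lemma integral_sq_eq_of_map_eq_gaussianReal (hZ : Measurable Z)
    (hZlaw : μ.map Z = gaussianReal 0 v) : ∫ ω, Z ω ^ 2 ∂μ = v := by
  rw [← variance_of_integral_eq_zero hZ.aemeasurable (integral_eq_of_map_eq_gaussianReal hZ hZlaw),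
    ← variance_id_map hZ.aemeasurable, hZlaw, variance_id_gaussianReal]

end Gaussian

section L2

variable {Ω : Type*} [MeasurableSpace Ω] {μ : Measure Ω} {f g e X : Ω → ℝ}

lemma integral_add_sq_of_integral_mul_eq_zero (hf : MemLp f 2 μ) (hg : MemLp g 2 μ)
    (h : ∫ ω, f ω * g ω ∂μ = 0) :
    ∫ ω, (f ω + g ω) ^ 2 ∂μ = ∫ ω, f ω ^ 2 ∂μ + ∫ ω, g ω ^ 2 ∂μ := by
  have hfg : Integrable (fun ω => 2 * (f ω * g ω)) μ := (hf.integrable_mul hg).const_mul 2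
  have hf_fg : Integrable (fun ω => f ω ^ 2 + 2 * (f ω * g ω)) μ := hf.integrable_sq.add hfg
  calc ∫ ω, (f ω + g ω) ^ 2 ∂μ = ∫ ω, f ω ^ 2 + 2 * (f ω * g ω) + g ω ^ 2 ∂μ := by
        congr 1; ext ω; ring
    _ = ∫ ω, f ω ^ 2 ∂μ + ∫ ω, g ω ^ 2 ∂μ := by
        rw [integral_add hf_fg hg.integrable_sq,
          integral_add hf.integrable_sq hfg, integral_const_mul, h]
        ring

lemma integral_sq_sub_ge_and_eq_iff_of_orthogonal (hg : MemLp g 2 μ) (he : MemLp e 2 μ)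
    (hX : MemLp X 2 μ) (horth : ∫ ω, (g ω - e ω) * (e ω - X ω) ∂μ = 0) :
    ∫ ω, (g ω - X ω) ^ 2 ∂μ ≥ ∫ ω, (e ω - X ω) ^ 2 ∂μ ∧
      (∫ ω, (g ω - X ω) ^ 2 ∂μ = ∫ ω, (e ω - X ω) ^ 2 ∂μ ↔ g =ᵐ[μ] e) := by
  have hpyth : ∫ ω, (g ω - X ω) ^ 2 ∂μ = ∫ ω, (g ω - e ω) ^ 2 ∂μ + ∫ ω, (e ω - X ω) ^ 2 ∂μ := by
    rw [← integral_add_sq_of_integral_mul_eq_zero (f := fun ω => g ω - e ω)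
      (g := fun ω => e ω - X ω) (hg.sub he) (he.sub hX) horth]
    simp only [sub_add_sub_cancel]
  have hzero : ∫ ω, (g ω - e ω) ^ 2 ∂μ = 0 ↔ g =ᵐ[μ] e := by
    rw [integral_eq_zero_iff_of_nonneg (f := fun ω => (g ω - e ω) ^ 2) (fun ω => sq_nonneg _)
      (hg.sub he).integrable_sq]
    refine Filter.eventually_congr (Filter.Eventually.of_forall fun ω => ?_)
    simp [sub_eq_zero]
  have hnonneg : 0 ≤ ∫ ω, (g ω - e ω) ^ 2 ∂μ := integral_nonneg fun ω => sq_nonneg _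
  refine ⟨by linarith, ?_⟩
  rw [← hzero, hpyth]
  constructor <;> intro h <;> linarith

end L2

section ConditionalExpectation

variable {Ω : Type*} {m m₀ : MeasurableSpace Ω} {μ : Measure Ω} [IsFiniteMeasure μ]
  {f X R : Ω → ℝ}

lemma integral_mul_condExp_sub_eq_zero (hm : m ≤ m₀) (hf : StronglyMeasurable[m] f)
    (hf2 : MemLp f 2 μ) (hX : MemLp X 2 μ) : ∫ ω, f ω * (μ[X|m] ω - X ω) ∂μ = 0 := by
  have hfX : Integrable (fun ω => f ω * X ω) μ := hf2.integrable_mul hX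
  have hfCE : Integrable (fun ω => f ω * μ[X|m] ω) μ := hf2.integrable_mul (hX.condExp one_le_two)
  have htower : ∫ ω, f ω * μ[X|m] ω ∂μ = ∫ ω, f ω * X ω ∂μ :=
    calc ∫ ω, f ω * μ[X|m] ω ∂μ = ∫ ω, μ[f * X|m] ω ∂μ :=
          integral_congr_ae (condExp_mul_of_stronglyMeasurable_left hf hfX
            (hX.integrable one_le_two)).symm
      _ = ∫ ω, f ω * X ω ∂μ := integral_condExp hm
  simp_rw [mul_sub]
  rw [integral_sub hfCE hfX, htower, sub_self]

lemma integral_condExp_sub_mul_sub_eq_integral_sq (hm : m ≤ m₀) (hR : StronglyMeasurable[m] R)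
    (hR2 : MemLp R 2 μ) (hX : MemLp X 2 μ) :
    ∫ ω, (μ[X|m] ω - X ω) * (R ω - X ω) ∂μ = ∫ ω, (μ[X|m] ω - X ω) ^ 2 ∂μ := by
  have hCE := hX.condExp (m := m) one_le_two
  have hres : Integrable (fun ω => (R ω - μ[X|m] ω) * (μ[X|m] ω - X ω)) μ :=
    (hR2.sub hCE).integrable_mul (hCE.sub hX)
  have hsq : Integrable (fun ω => (μ[X|m] ω - X ω) ^ 2) μ := (hCE.sub hX).integrable_sq
  calc ∫ ω, (μ[X|m] ω - X ω) * (R ω - X ω) ∂μ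
      = ∫ ω, (R ω - μ[X|m] ω) * (μ[X|m] ω - X ω) + (μ[X|m] ω - X ω) ^ 2 ∂μ := by
        congr 1; ext ω; ring
    _ = ∫ ω, (μ[X|m] ω - X ω) ^ 2 ∂μ := by
        rw [integral_add hres hsq,
          integral_mul_condExp_sub_eq_zero (f := fun ω => R ω - μ[X|m] ω) hm
            (hR.sub stronglyMeasurable_condExp) (hR2.sub hCE) hX,
          zero_add]

lemma integral_mul_condExp_comb_sub (hm : m ≤ m₀) (hf : StronglyMeasurable[m] f)
    (hf2 : MemLp f 2 μ) (hR2 : MemLp R 2 μ) (hX : MemLp X 2 μ) (c : ℝ) :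
    ∫ ω, f ω * (c * μ[X|m] ω - (c - 1) * R ω - X ω) ∂μ = (1 - c) * ∫ ω, f ω * (R ω - X ω) ∂μ := by
  have hCE := hX.condExp (m := m) one_le_two
  have h1 : Integrable (fun ω => c * (f ω * (μ[X|m] ω - X ω))) μ :=
    (hf2.integrable_mul (hCE.sub hX)).const_mul c
  have h2 : Integrable (fun ω => (1 - c) * (f ω * (R ω - X ω))) μ :=
    (hf2.integrable_mul (hR2.sub hX)).const_mul (1 - c)
  calc ∫ ω, f ω * (c * μ[X|m] ω - (c - 1) * R ω - X ω) ∂μ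
      = ∫ ω, c * (f ω * (μ[X|m] ω - X ω)) + (1 - c) * (f ω * (R ω - X ω)) ∂μ := by
        congr 1; ext ω; ring
    _ = (1 - c) * ∫ ω, f ω * (R ω - X ω) ∂μ := by
        rw [integral_add h1 h2, integral_const_mul, integral_const_mul,
          integral_mul_condExp_sub_eq_zero hm hf hf2 hX, mul_zero, zero_add]

lemma integral_condExp_comb_mul_sub (hm : m ≤ m₀) (hR : StronglyMeasurable[m] R)
    (hR2 : MemLp R 2 μ) (hX : MemLp X 2 μ) (c : ℝ) :
    ∫ ω, (c * μ[X|m] ω - (c - 1) * R ω) * (R ω - X ω) ∂μ =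
      c * ∫ ω, (μ[X|m] ω - X ω) ^ 2 ∂μ - (c - 1) * ∫ ω, (R ω - X ω) ^ 2 ∂μ
        + ∫ ω, X ω * (R ω - X ω) ∂μ := by
  have hCE := hX.condExp (m := m) one_le_two
  have h1 : Integrable (fun ω => c * ((μ[X|m] ω - X ω) * (R ω - X ω))) μ :=
    ((hCE.sub hX).integrable_mul (hR2.sub hX)).const_mul c
  have h2 : Integrable (fun ω => (c - 1) * (R ω - X ω) ^ 2) μ :=
    (hR2.sub hX).integrable_sq.const_mul (c - 1)
  have h12 : Integrable
      (fun ω => c * ((μ[X|m] ω - X ω) * (R ω - X ω)) - (c - 1) * (R ω - X ω) ^ 2) μ := h1.sub h2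
  have h3 : Integrable (fun ω => X ω * (R ω - X ω)) μ := hX.integrable_mul (hR2.sub hX)
  calc ∫ ω, (c * μ[X|m] ω - (c - 1) * R ω) * (R ω - X ω) ∂μ
      = ∫ ω, c * ((μ[X|m] ω - X ω) * (R ω - X ω)) - (c - 1) * (R ω - X ω) ^ 2
          + X ω * (R ω - X ω) ∂μ := by
        congr 1; ext ω; ring
    _ = _ := by
        rw [integral_add h12 h3, integral_sub h1 h2, integral_const_mul,
          integral_const_mul, integral_condExp_sub_mul_sub_eq_integral_sq hm hR hR2 hX]

theorem integral_sq_sub_ge_and_eq_iff_of_condExp_comb {g : Ω → ℝ} {c : ℝ} (hm : m ≤ m₀)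
    (hR : StronglyMeasurable[m] R) (hR2 : MemLp R 2 μ) (hX : MemLp X 2 μ)
    (hXR : ∫ ω, X ω * (R ω - X ω) ∂μ = 0)
    (hc : c * (∫ ω, (R ω - X ω) ^ 2 ∂μ - ∫ ω, (μ[X|m] ω - X ω) ^ 2 ∂μ) =
      ∫ ω, (R ω - X ω) ^ 2 ∂μ)
    (hg : StronglyMeasurable[m] g) (hg2 : MemLp g 2 μ) (hgR : ∫ ω, g ω * (R ω - X ω) ∂μ = 0) :
    ∫ ω, (g ω - X ω) ^ 2 ∂μ ≥ ∫ ω, (c * μ[X|m] ω - (c - 1) * R ω - X ω) ^ 2 ∂μ ∧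
      (∫ ω, (g ω - X ω) ^ 2 ∂μ = ∫ ω, (c * μ[X|m] ω - (c - 1) * R ω - X ω) ^ 2 ∂μ ↔
        g =ᵐ[μ] fun ω => c * μ[X|m] ω - (c - 1) * R ω) := by
  have hstar2 : MemLp (fun ω => c * μ[X|m] ω - (c - 1) * R ω) 2 μ :=
    ((hX.condExp one_le_two).const_mul c).sub (hR2.const_mul (c - 1))
  have hstarR : ∫ ω, (c * μ[X|m] ω - (c - 1) * R ω) * (R ω - X ω) ∂μ = 0 := by
    rw [integral_condExp_comb_mul_sub hm hR hR2 hX, hXR]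
    linear_combination -hc
  have hdiff : StronglyMeasurable[m] fun ω => g ω - (c * μ[X|m] ω - (c - 1) * R ω) :=
    hg.sub ((stronglyMeasurable_const.mul stronglyMeasurable_condExp).sub
      (stronglyMeasurable_const.mul hR))
  refine integral_sq_sub_ge_and_eq_iff_of_orthogonal hg2 hstar2 hX ?_
  have hgR' : Integrable (fun ω => g ω * (R ω - X ω)) μ := hg2.integrable_mul (hR2.sub hX)
  have hstarR' : Integrable (fun ω => (c * μ[X|m] ω - (c - 1) * R ω) * (R ω - X ω)) μ :=
    hstar2.integrable_mul (hR2.sub hX)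
  rw [integral_mul_condExp_comb_sub hm hdiff (hg2.sub hstar2) hR2 hX]
  simp_rw [sub_mul (g _)]
  rw [integral_sub hgR' hstarR', hgR, hstarR, sub_zero, mul_zero]

end ConditionalExpectation

theorem eta_star_minimizes_mse_general
    {Ω : Type*} [MeasurableSpace Ω] (μ : Measure Ω) [IsProbabilityMeasure μ]
    (X Z : Ω → ℝ) (hX : Measurable X) (hZ : Measurable Z)
    (hZlaw : Measure.map Z μ = gaussianReal 0 1)
    (hindep : IndepFun X Z μ)
    (hX2 : MemLp X 2 μ)
    (τ : ℝ) (hτ : 0 < τ)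
    (R : Ω → ℝ) (hR : R = fun ω => X ω + τ * Z ω)
    (CE : Ω → ℝ) (hCE : CE = μ[X | MeasurableSpace.comap R inferInstance])
    (mmseB : ℝ) (hmmseB : mmseB = ∫ ω, (CE ω - X ω) ^ 2 ∂μ)
    (hB2 : mmseB < τ ^ 2)
    (Cstar : ℝ) (hCstar : Cstar = τ ^ 2 / (τ ^ 2 - mmseB))
    (ηstar : Ω → ℝ) (hηstar : ηstar = fun ω => Cstar * (CE ω - mmseB / τ ^ 2 * R ω))
    (η : ℝ → ℝ) (hη : Measurable η)
    (hη2 : MemLp (fun ω => η (R ω)) 2 μ)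
    (horth : ∫ ω, η (R ω) * (R ω - X ω) ∂μ = 0) :
    ∫ ω, (η (R ω) - X ω) ^ 2 ∂μ ≥ ∫ ω, (ηstar ω - X ω) ^ 2 ∂μ
    ∧ (∫ ω, (η (R ω) - X ω) ^ 2 ∂μ = ∫ ω, (ηstar ω - X ω) ^ 2 ∂μ
        ↔ (fun ω => η (R ω)) =ᵐ[μ] ηstar) := by
  have hRmeas : Measurable R := by rw [hR]; exact hX.add (hZ.const_mul τ)
  have hZ2 := memLp_two_of_map_eq_gaussianReal hZ hZlaw
  have hR2 : MemLp R 2 μ := by rw [hR]; exact hX2.add (hZ2.const_mul τ)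
  have hnoise : ∀ ω, R ω - X ω = τ * Z ω := fun ω => by simp [hR]
  have hXnoise : ∫ ω, X ω * (R ω - X ω) ∂μ = 0 := by
    simp_rw [hnoise, mul_left_comm _ τ, integral_const_mul,
      hindep.integral_fun_mul_eq_mul_integral hX.aestronglyMeasurable hZ.aestronglyMeasurable,
      integral_eq_of_map_eq_gaussianReal hZ hZlaw, mul_zero]
  have hnoise_sq : ∫ ω, (R ω - X ω) ^ 2 ∂μ = τ ^ 2 := by
    simp_rw [hnoise, mul_pow, integral_const_mul, integral_sq_eq_of_map_eq_gaussianReal hZ hZlaw]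
    simp
  have hgap : τ ^ 2 - mmseB ≠ 0 := by linarith
  have hc : Cstar * (τ ^ 2 - mmseB) = τ ^ 2 := by rw [hCstar]; field_simp
  have hηstar' : ηstar = fun ω => Cstar * CE ω - (Cstar - 1) * R ω := by
    have : Cstar * (mmseB / τ ^ 2) = Cstar - 1 := by rw [hCstar]; field_simp; ring
    ext ω; rw [hηstar, ← this]; ring
  subst hCE hηstar'
  rw [← hnoise_sq, hmmseB] at hc
  exact integral_sq_sub_ge_and_eq_iff_of_condExp_comb hRmeas.comap_le
    (comap_measurable R).stronglyMeasurable hR2 hX2 hXnoise hc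
    (hη.comp (comap_measurable R)).stronglyMeasurable hη2 horth

/-- Nonlinear-estimation optimality in Lemma 1 of the paper: for `R = X + τZ`
(`Z` standard Gaussian independent of `X`), `mmse_B = E[(E[X|R] − X)²]` and the
optimal divergence-free estimator `η*(r) = C*·(E[X|R=r] − (mmse_B/τ²)·r)` with
`C* = τ²/(τ² − mmse_B)`, any estimator `η` satisfying the orthogonality condition
`E[η(R)·(R − X)] = 0` satisfies `E[(η(R) − X)²] ≥ E[(η*(R) − X)²]`, with equality
iff `η(R) = η*(R)` almost surely. -/
theorem eta_star_minimizes_mse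
    {Ω : Type*} [MeasurableSpace Ω] (μ : Measure Ω) [IsProbabilityMeasure μ]
    (X Z : Ω → ℝ) (hX : Measurable X) (hZ : Measurable Z)
    (hZlaw : Measure.map Z μ = gaussianReal 0 1)
    (hindep : IndepFun X Z μ)
    (hX2 : MemLp X 2 μ)
    (τ : ℝ) (hτ : 0 < τ)
    (R : Ω → ℝ) (hR : R = fun ω => X ω + τ * Z ω)
    (CE : Ω → ℝ) (hCE : CE = μ[X | MeasurableSpace.comap R inferInstance])
    (mmseB : ℝ) (hmmseB : mmseB = ∫ ω, (CE ω - X ω) ^ 2 ∂μ)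
    (hB1 : 0 < mmseB) (hB2 : mmseB < τ ^ 2)
    (Cstar : ℝ) (hCstar : Cstar = τ ^ 2 / (τ ^ 2 - mmseB))
    (ηstar : Ω → ℝ) (hηstar : ηstar = fun ω => Cstar * (CE ω - mmseB / τ ^ 2 * R ω))
    (η : ℝ → ℝ) (hη : Measurable η)
    (hη2 : MemLp (fun ω => η (R ω)) 2 μ)
    (horth : ∫ ω, η (R ω) * (R ω - X ω) ∂μ = 0) :
    ∫ ω, (η (R ω) - X ω) ^ 2 ∂μ ≥ ∫ ω, (ηstar ω - X ω) ^ 2 ∂μ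
    ∧ (∫ ω, (η (R ω) - X ω) ^ 2 ∂μ = ∫ ω, (ηstar ω - X ω) ^ 2 ∂μ
        ↔ (fun ω => η (R ω)) =ᵐ[μ] ηstar) :=
  eta_star_minimizes_mse_general μ X Z hX hZ hZlaw hindep hX2 τ hτ R hR CE hCE mmseB hmmseB hB2
    Cstar hCstar ηstar hηstar η hη hη2 horth
end

section
/- Let M < N and let A be a real M×N matrix such that A·Aᵀ is invertible. Set W = (N/M)·Aᵀ·(A·Aᵀ)⁻¹ and B = I − W·A. Then tr(I − W·A) = 0 (so W is a de-correlated linear estimator), (1/N)·tr(B·Bᵀ) = (N − M)/M, and (1/N)·tr(W·Wᵀ) = (N/M²)·tr((A·Aᵀ)⁻¹). Consequently, the state-evolution map (1/N)tr(BBᵀ)·v² + (1/N)tr(WWᵀ)·σ² equals ((N − M)/M)·v² + (N/M²)·tr((A·Aᵀ)⁻¹)·σ². -/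
open Matrix

/-! With `G = A Aᵀ` invertible, `R = Aᵀ G⁻¹` is a right inverse of `A`, so `P = R A` is a
symmetric idempotent of trace `tr (A R) = M`. Then `W = c R` and `B = 1 - c P` with `c = N/M`,
hence `tr (I - W A) = N - c M = 0`, `tr (B Bᵀ) = tr (B²) = N + (c² - 2c) M` and
`tr (W Wᵀ) = c² tr (Rᵀ R) = c² tr G⁻¹`. -/

namespace Matrix

variable {m n α : Type*} [Fintype m] [Fintype n] [DecidableEq m] [CommRing α]

noncomputable def rightPinv (A : Matrix m n α) : Matrix n m α := Aᵀ * (A * Aᵀ)⁻¹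

noncomputable def rowSpaceProj (A : Matrix m n α) : Matrix n n α := rightPinv A * A

theorem mul_rightPinv {A : Matrix m n α} (hA : IsUnit (A * Aᵀ).det) : A * rightPinv A = 1 := by
  rw [rightPinv, ← Matrix.mul_assoc, mul_nonsing_inv _ hA]

theorem transpose_rightPinv (A : Matrix m n α) : (rightPinv A)ᵀ = (A * Aᵀ)⁻¹ * A := by
  rw [rightPinv, transpose_mul, transpose_nonsing_inv, transpose_mul, transpose_transpose]

theorem transpose_rightPinv_mul_rightPinv {A : Matrix m n α} (hA : IsUnit (A * Aᵀ).det) :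
    (rightPinv A)ᵀ * rightPinv A = (A * Aᵀ)⁻¹ := by
  rw [transpose_rightPinv, Matrix.mul_assoc, mul_rightPinv hA, Matrix.mul_one]

theorem transpose_rowSpaceProj (A : Matrix m n α) : (rowSpaceProj A)ᵀ = rowSpaceProj A := by
  rw [rowSpaceProj, transpose_mul, transpose_rightPinv, rightPinv, Matrix.mul_assoc]

theorem isIdempotentElem_rowSpaceProj {A : Matrix m n α} (hA : IsUnit (A * Aᵀ).det) :
    IsIdempotentElem (rowSpaceProj A) := by
  rw [IsIdempotentElem, rowSpaceProj, Matrix.mul_assoc, ← Matrix.mul_assoc A, mul_rightPinv hA,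
    Matrix.one_mul]

theorem trace_rowSpaceProj {A : Matrix m n α} (hA : IsUnit (A * Aᵀ).det) :
    trace (rowSpaceProj A) = Fintype.card m := by
  rw [rowSpaceProj, trace_mul_comm, mul_rightPinv hA, trace_one]

theorem trace_one_sub_smul_mul_self [DecidableEq n] {P : Matrix n n α} (hP : IsIdempotentElem P)
    (c : α) :
    trace ((1 - c • P) * (1 - c • P)) = Fintype.card n + (c ^ 2 - 2 * c) * trace P := by
  have hsq : (1 - c • P) * (1 - c • P) = 1 + (c ^ 2 - 2 * c) • P := by
    rw [sub_mul, mul_sub, mul_sub, Matrix.one_mul, Matrix.mul_one, Matrix.one_mul, smul_mul_smul,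
      hP.eq, sub_smul, two_mul, add_smul, sq]
    abel
  rw [hsq, trace_add, trace_one, trace_smul, smul_eq_mul]

end Matrix

/-- Simplified MSE-estimation formula for the de-correlated pseudo-inverse estimator
(Section III of the paper): for `M < N`, `A·Aᵀ` invertible,
`W = (N/M)·Aᵀ·(A·Aᵀ)⁻¹` and `B = I − W·A`, one has `tr(I − W·A) = 0` (so `W` is
de-correlated), `(1/N)·tr(B·Bᵀ) = (N − M)/M`,
`(1/N)·tr(W·Wᵀ) = (N/M²)·tr((A·Aᵀ)⁻¹)`, and hence the state-evolution map equals
`((N − M)/M)·v² + (N/M²)·tr((A·Aᵀ)⁻¹)·σ²`. -/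
theorem pinv_decorrelated_state_evolution
    (M N : ℕ) (hM : 0 < M) (hMN : M < N)
    (A : Matrix (Fin M) (Fin N) ℝ)
    (hinv : IsUnit (A * Aᵀ).det)
    (W : Matrix (Fin N) (Fin M) ℝ)
    (hW : W = ((N : ℝ) / M) • (Aᵀ * (A * Aᵀ)⁻¹))
    (B : Matrix (Fin N) (Fin N) ℝ) (hB : B = 1 - W * A) :
    Matrix.trace ((1 : Matrix (Fin N) (Fin N) ℝ) - W * A) = 0
    ∧ (1 / N : ℝ) * Matrix.trace (B * Bᵀ) = ((N : ℝ) - M) / M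
    ∧ (1 / N : ℝ) * Matrix.trace (W * Wᵀ)
        = ((N : ℝ) / M ^ 2) * Matrix.trace (A * Aᵀ)⁻¹
    ∧ ∀ v2 σ2 : ℝ,
        (1 / N : ℝ) * Matrix.trace (B * Bᵀ) * v2
          + (1 / N : ℝ) * Matrix.trace (W * Wᵀ) * σ2
        = ((N : ℝ) - M) / M * v2
          + ((N : ℝ) / M ^ 2) * Matrix.trace (A * Aᵀ)⁻¹ * σ2 := by
  have hM0 : (M : ℝ) ≠ 0 := Nat.cast_ne_zero.mpr hM.ne'
  have hN0 : (N : ℝ) ≠ 0 := Nat.cast_ne_zero.mpr (by omega)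
  have hWA : W * A = ((N : ℝ) / M) • rowSpaceProj A := by
    rw [hW, smul_mul, rowSpaceProj, rightPinv]
  have hB' : B = 1 - ((N : ℝ) / M) • rowSpaceProj A := by rw [hB, hWA]
  have hBT : Bᵀ = B := by
    rw [hB', transpose_sub, transpose_one, transpose_smul, transpose_rowSpaceProj]
  have htrP : trace (rowSpaceProj A) = M := by rw [trace_rowSpaceProj hinv, Fintype.card_fin]
  have hdecorr : trace ((1 : Matrix (Fin N) (Fin N) ℝ) - W * A) = 0 := by
    rw [hWA, trace_sub, trace_one, trace_smul, htrP, smul_eq_mul, Fintype.card_fin]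
    field_simp
    ring
  have hBB : (1 / N : ℝ) * trace (B * Bᵀ) = ((N : ℝ) - M) / M := by
    rw [hBT, hB', trace_one_sub_smul_mul_self (isIdempotentElem_rowSpaceProj hinv), htrP,
      Fintype.card_fin]
    field_simp
    ring
  have hWW : (1 / N : ℝ) * trace (W * Wᵀ) = ((N : ℝ) / M ^ 2) * trace (A * Aᵀ)⁻¹ := by
    rw [hW, ← rightPinv, transpose_smul, smul_mul, Matrix.mul_smul, smul_smul, trace_smul,
      trace_mul_comm, transpose_rightPinv_mul_rightPinv hinv, smul_eq_mul]
    field_simp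
  exact ⟨hdecorr, hBB, hWW, fun v2 σ2 => by rw [hBB, hWW]⟩
end
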